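/- arXiv:hep-th/0403164 — 2 statements merged into one kernel-verified Lean document; each statement's English description precedes it below -/
import Mathlib

section
/- Let E₀ be an invertible n×n real matrix and let Π be an antisymmetric n×n real matrix such that E₀⁻¹ + Π is invertible; set E = (E₀⁻¹ + Π)⁻¹. If E₀ is symmetric and positive definite, then E₀⁻¹ + Π is automatically invertible and the symmetric part of E is positive definite. -/
/-!
Antisymmetry of `Π` kills its quadratic form, so `A = E₀⁻¹ + Π` has the same positive quadratic
form as `E₀⁻¹` and is therefore injective, hence invertible. Moreover `A + Aᵀ = 2 E₀⁻¹`, and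
`A⁻¹ + A⁻¹ᵀ = A⁻¹ (A + Aᵀ) A⁻¹ᵀ` exhibits the symmetric part of `A⁻¹` as a congruence of the
positive definite matrix `E₀⁻¹`.
-/

open Matrix

namespace Matrix

variable {ι : Type*} [Fintype ι]

theorem dotProduct_mulVec_self_eq_zero_of_transpose_eq_neg {R : Type*} [CommRing R]
    [NoZeroDivisors R] [CharZero R] {P : Matrix ι ι R} (hP : Pᵀ = -P) (x : ι → R) :
    x ⬝ᵥ P *ᵥ x = 0 := by
  rw [← CharZero.eq_neg_self_iff]
  calc x ⬝ᵥ P *ᵥ x = x ⬝ᵥ Pᵀ *ᵥ x := by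
        rw [mulVec_transpose, dotProduct_mulVec, dotProduct_comm]
    _ = -(x ⬝ᵥ P *ᵥ x) := by rw [hP, neg_mulVec, dotProduct_neg]

theorem inv_add_transpose_inv {R : Type*} [CommRing R] [DecidableEq ι] {A : Matrix ι ι R}
    (hA : IsUnit A) : A⁻¹ + A⁻¹ᵀ = A⁻¹ * (A + Aᵀ) * A⁻¹ᵀ := by
  have hAT : IsUnit Aᵀ := (isUnit_transpose A).mpr hA
  rw [Matrix.mul_add, Matrix.add_mul, nonsing_inv_mul _ ((isUnit_iff_isUnit_det A).mp hA),
    Matrix.one_mul, transpose_nonsing_inv, Matrix.mul_assoc,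
    mul_nonsing_inv _ ((isUnit_iff_isUnit_det _).mp hAT), Matrix.mul_one, add_comm]

namespace PosDef

variable {K : Type*} [Field K] [PartialOrder K] [StarRing K] [TrivialStar K] [CharZero K]

theorem isUnit_add_of_transpose_eq_neg [DecidableEq ι] {M P : Matrix ι ι K} (hM : M.PosDef)
    (hP : Pᵀ = -P) : IsUnit (M + P) := by
  refine mulVec_injective_iff_isUnit.mp fun x y hxy ↦ sub_eq_zero.mp ?_
  by_contra hne
  have hpos := hM.dotProduct_mulVec_pos hne
  rw [star_trivial] at hpos
  have hzero : (x - y) ⬝ᵥ (M + P) *ᵥ (x - y) = 0 := by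
    rw [mulVec_sub, hxy, sub_self, dotProduct_zero]
  rw [add_mulVec, dotProduct_add, dotProduct_mulVec_self_eq_zero_of_transpose_eq_neg hP,
    add_zero] at hzero
  exact hpos.ne' hzero

end PosDef

end Matrix

theorem sym_part_posDef_of_posDef_general (n : ℕ)
    (E₀ Pi : Matrix (Fin n) (Fin n) ℝ)
    (hPi : Piᵀ = -Pi)
    (hpos : E₀.PosDef) :
    IsUnit (E₀⁻¹ + Pi) ∧
      ((1/2 : ℝ) • ((E₀⁻¹ + Pi)⁻¹ + ((E₀⁻¹ + Pi)⁻¹)ᵀ)).PosDef := by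
  have hA : IsUnit (E₀⁻¹ + Pi) := hpos.inv.isUnit_add_of_transpose_eq_neg hPi
  refine ⟨hA, ?_⟩
  have hsym : (1/2 : ℝ) • (E₀⁻¹ + Pi + (E₀⁻¹ + Pi)ᵀ) = E₀⁻¹ := by
    rw [transpose_add, (isHermitian_iff_isSymm.mp hpos.inv.isHermitian).eq, hPi]
    module
  rw [inv_add_transpose_inv hA, ← Matrix.smul_mul, ← Matrix.mul_smul, hsym]
  have hconj := (isUnit_nonsing_inv_iff.mpr hA).posDef_star_right_conjugate_iff.mpr hpos.inv
  rwa [star_eq_conjTranspose, conjTranspose_eq_transpose_of_trivial] at hconj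

/-- if `E₀` is symmetric positive definite and `Π` is antisymmetric, then
`E₀⁻¹ + Π` is invertible and the symmetric part of `E = (E₀⁻¹ + Π)⁻¹` is positive
definite. -/
theorem sym_part_posDef_of_posDef (n : ℕ)
    (E₀ Pi : Matrix (Fin n) (Fin n) ℝ)
    (hPi : Piᵀ = -Pi)
    (hsymm : E₀.IsSymm) (hpos : E₀.PosDef) :
    IsUnit (E₀⁻¹ + Pi) ∧
      ((1/2 : ℝ) • ((E₀⁻¹ + Pi)⁻¹ + ((E₀⁻¹ + Pi)⁻¹)ᵀ)).PosDef :=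
  sym_part_posDef_of_posDef_general n E₀ Pi hPi hpos
end

section
/- The pseudo-Riemannian metric on ℝ³ given by G = [[p, 0, pφ²],[0, p, -pφ¹],[pφ², -pφ¹, r + p(φ¹)² + p(φ²)²]] (with p, r nonzero real constants) has vanishing Riemann curvature tensor. -/
open scoped BigOperators

/-- Partial derivative in the `i`-th coordinate direction on `ℝ³`. -/
noncomputable def pd (i : Fin 3) (f : (Fin 3 → ℝ) → ℝ) (x : Fin 3 → ℝ) : ℝ :=
  fderiv ℝ f x (Pi.single i 1)

/-- Christoffel symbols `Γ^k_{ij}` of the Levi-Civita connection of the metric `g`. -/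
noncomputable def christoffel (g : (Fin 3 → ℝ) → Matrix (Fin 3) (Fin 3) ℝ)
    (k i j : Fin 3) (x : Fin 3 → ℝ) : ℝ :=
  (1/2) * ∑ l, (g x)⁻¹ k l *
    (pd i (fun y => g y l j) x + pd j (fun y => g y l i) x - pd l (fun y => g y i j) x)

/-- Riemann curvature tensor `R^l_{kij}`. -/
noncomputable def riemann (g : (Fin 3 → ℝ) → Matrix (Fin 3) (Fin 3) ℝ)
    (l k i j : Fin 3) (x : Fin 3 → ℝ) : ℝ :=
  pd i (fun y => christoffel g l j k y) x - pd j (fun y => christoffel g l i k y) x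
    + ∑ m, (christoffel g l i m x * christoffel g m j k x
        - christoffel g l j m x * christoffel g m i k x)

/-- Ricci tensor `R_{jk} = R^i_{jik}`. -/
noncomputable def ricci (g : (Fin 3 → ℝ) → Matrix (Fin 3) (Fin 3) ℝ)
    (j k : Fin 3) (x : Fin 3 → ℝ) : ℝ :=
  ∑ i, riemann g i j i k x

/-- Scalar curvature `R = g^{jk} R_{jk}`. -/
noncomputable def scalarCurv (g : (Fin 3 → ℝ) → Matrix (Fin 3) (Fin 3) ℝ)
    (x : Fin 3 → ℝ) : ℝ :=
  ∑ j, ∑ k, (g x)⁻¹ j k * ricci g j k x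

/-- The metric of the sigma model coming from the decomposition (7₀|1). -/
noncomputable def metric701 (p r : ℝ) (x : Fin 3 → ℝ) : Matrix (Fin 3) (Fin 3) ℝ :=
  !![p, 0, p * x 1;
     0, p, -p * x 0;
     p * x 1, -p * x 0, r + p * (x 0)^2 + p * (x 1)^2]

/-!
With `z = φ¹ + iφ²` the metric reads `G = p |dz - i z dφ³|² + r (dφ³)² = p |dw|² + r (dφ³)²`
where `w = e^{-iφ³} z`, so `G` is flat. Directly: the Christoffel symbols are `Γ¹₂₃ = 1`,
`Γ²₁₃ = -1`, `Γ¹₃₃ = -φ¹`, `Γ²₃₃ = -φ²`, and the only nonzero derivative terms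
`∂₁Γ¹₃₃ = ∂₂Γ²₃₃ = -1` are cancelled by the quadratic terms.
-/

section PartialDerivative

variable {f g : (Fin 3 → ℝ) → ℝ} {x : Fin 3 → ℝ} (i : Fin 3)

lemma pd_const (c : ℝ) : pd i (fun _ => c) x = 0 := by
  simp [pd]

lemma pd_coord (j : Fin 3) : pd i (fun y => y j) x = if j = i then 1 else 0 := by
  simp [pd, fderiv_apply, Pi.single_apply]

lemma pd_neg : pd i (fun y => -f y) x = -pd i f x := by
  simp [pd, fderiv_fun_neg]

lemma pd_add (hf : DifferentiableAt ℝ f x) (hg : DifferentiableAt ℝ g x) :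
    pd i (fun y => f y + g y) x = pd i f x + pd i g x := by
  simp [pd, fderiv_fun_add hf hg]

lemma pd_mul (hf : DifferentiableAt ℝ f x) (hg : DifferentiableAt ℝ g x) :
    pd i (fun y => f y * g y) x = pd i f x * g x + f x * pd i g x := by
  simp [pd, fderiv_fun_mul hf hg]
  ring

end PartialDerivative

lemma metric701_inv {p r : ℝ} (hp : p ≠ 0) (hr : r ≠ 0) (x : Fin 3 → ℝ) :
    (metric701 p r x)⁻¹ =
      !![1/p + (x 1)^2/r, -(x 0 * x 1)/r, -(x 1)/r;
         -(x 0 * x 1)/r, 1/p + (x 0)^2/r, x 0/r;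
         -(x 1)/r, x 0/r, 1/r] := by
  apply Matrix.inv_eq_right_inv
  ext i j
  fin_cases i <;> fin_cases j <;>
    simp [metric701, Matrix.mul_apply, Fin.sum_univ_three] <;> field_simp <;> ring

/-- `christoffel701 x k i j` is `Γ^k_{ij}` at `x` (index `0` is `φ¹`); it does not depend on
`p` and `r`. -/
def christoffel701 (x : Fin 3 → ℝ) : Fin 3 → Fin 3 → Fin 3 → ℝ :=
  ![![![0, 0, 0], ![0, 0, 1], ![0, 1, -x 0]],
    ![![0, 0, -1], ![0, 0, 0], ![-1, 0, -x 1]],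
    0]

lemma christoffel_metric701 {p r : ℝ} (hp : p ≠ 0) (hr : r ≠ 0) (k i j : Fin 3)
    (x : Fin 3 → ℝ) : christoffel (metric701 p r) k i j x = christoffel701 x k i j := by
  rw [christoffel, metric701_inv hp hr]
  fin_cases k <;> fin_cases i <;> fin_cases j <;>
    simp (disch := fun_prop) only [metric701, christoffel701, Matrix.of_apply,
      Matrix.cons_val', Matrix.cons_val_fin_one, Matrix.cons_val_zero, Matrix.cons_val_one,
      Matrix.cons_val, Fin.isValue, Fin.reduceFinMk, Fin.mk_one, Fin.zero_eta, Fin.reduceEq,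
      Pi.zero_apply, Fin.sum_univ_three, pd_const, pd_coord, pd_add, pd_mul, pow_two,
      ↓reduceIte] <;> field_simp <;> ring

/-- the metric of the (7₀|1) sigma model is flat. -/
theorem riemann_metric701_eq_zero (p r : ℝ) (hp : p ≠ 0) (hr : r ≠ 0) :
    ∀ (l k i j : Fin 3) (x : Fin 3 → ℝ), riemann (metric701 p r) l k i j x = 0 := by
  intro l k i j x
  simp only [riemann, christoffel_metric701 hp hr, Fin.sum_univ_three]
  fin_cases l <;> fin_cases k <;> fin_cases i <;> fin_cases j <;>
    simp [christoffel701, pd_const, pd_neg, pd_coord]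
end
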